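/- Assuming the axiom of choice and with X a set of cardinality of the continuum, the continuum hypothesis is equivalent to the existence of subsets R, C ⊆ X² with R ∪ C = X² such that for every x ∈ X the sets R ∩ ({x'} × {x} : x' ∈ X) (the intersection of R with the row through x) and C ∩ ({x} × {x'} : x' ∈ X) (the intersection of C with the column through x) are countable. -/

import Mathlib

/-!
Under CH, well-order `X` in type `ω₁`: every initial segment is countable, so `R = {(x', x) | x' ≤ x}`
and `C = {(x, x') | x' ≤ x}` work. Conversely, if `A ⊆ X` is uncountable with `#A < #X`, the columns
of `C` over `A` cover at most `#A` points, so some `y` lies in none of them; then `A × {y} ⊆ R`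
puts `A` into a countable row. Hence every subset of `X` of size `ℵ₁` is countable, i.e. `#X ≤ ℵ₁`.
-/

open Cardinal Set Function

universe u

def HasCountableRowColumnCover (X : Type*) : Prop :=
  ∃ R C : Set (X × X), R ∪ C = Set.univ ∧
    ∀ x : X, (R ∩ {p : X × X | p.2 = x}).Countable ∧ (C ∩ {p : X × X | p.1 = x}).Countable

section

variable {X : Type u}

theorem hasCountableRowColumnCover_of_injective {α : Type*} [LinearOrder α]
    (hα : ∀ a : α, (Iic a).Countable) {f : X → α} (hf : Injective f) :
    HasCountableRowColumnCover X := by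
  have hseg (x : X) : {x' | f x' ≤ f x}.Countable := (hα (f x)).preimage hf
  refine ⟨{p | f p.1 ≤ f p.2}, {p | f p.2 ≤ f p.1}, ?_, fun x => ⟨?_, ?_⟩⟩
  · exact eq_univ_of_forall fun p : X × X => le_total (f p.1) (f p.2)
  · refine ((hseg x).prod (countable_singleton x)).mono ?_
    rintro ⟨x', _⟩ ⟨hle, rfl⟩
    exact ⟨hle, rfl⟩
  · refine ((countable_singleton x).prod (hseg x)).mono ?_
    rintro ⟨_, x'⟩ ⟨hle, rfl⟩
    exact ⟨rfl, hle⟩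

theorem countable_Iic_toType_ord_aleph_one (i : (ℵ₁ : Cardinal.{u}).ord.ToType) :
    (Iic i).Countable := by
  rw [← le_aleph0_iff_set_countable, ← lt_aleph_one_iff]
  simpa using mk_Iic_lt i (by simp) (by simp)

theorem hasCountableRowColumnCover_of_mk_le_aleph_one (hX : #X ≤ ℵ₁) :
    HasCountableRowColumnCover X := by
  obtain ⟨f⟩ : Nonempty (X ↪ (ℵ₁ : Cardinal.{u}).ord.ToType) := by
    rwa [← le_def, mk_ord_toType]
  exact hasCountableRowColumnCover_of_injective countable_Iic_toType_ord_aleph_one f.injective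

theorem HasCountableRowColumnCover.countable_of_mk_lt (h : HasCountableRowColumnCover X)
    {A : Set X} (hA : #A < #X) : A.Countable := by
  obtain ⟨R, C, hRC, hsec⟩ := h
  by_contra hAc
  have hA₀ : ℵ₀ ≤ #A := (not_le.1 (mt le_aleph0_iff_set_countable.1 hAc)).le
  have hcol (a : X) : #{y | (a, y) ∈ C} ≤ ℵ₀ := by
    refine le_aleph0_iff_set_countable.2 <|
      ((hsec a).2.preimage (Prod.mk_right_injective a)).mono fun y hy => ?_
    exact ⟨hy, rfl⟩
  have hS : #(⋃ a ∈ A, {y | (a, y) ∈ C}) < #X :=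
    calc #(⋃ a ∈ A, {y | (a, y) ∈ C})
        ≤ #A * ⨆ a : A, #{y | (a.1, y) ∈ C} := mk_biUnion_le _ A
      _ ≤ #A * ℵ₀ := by gcongr; exact ciSup_le' fun a => hcol a
      _ = #A := mul_aleph0_eq hA₀
      _ < #X := hA
  obtain ⟨y, hy⟩ := compl_nonempty_of_mk_lt_mk hS
  refine hAc (((hsec y).1.preimage (Prod.mk_left_injective y)).mono fun a ha => ?_)
  exact ⟨(hRC ▸ mem_univ (a, y)).resolve_right fun hC => hy (mem_biUnion ha hC), rfl⟩

theorem HasCountableRowColumnCover.mk_le_aleph_one (h : HasCountableRowColumnCover X) :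
    #X ≤ ℵ₁ := by
  by_contra! hX
  obtain ⟨A, hA⟩ := le_mk_iff_exists_set.1 hX.le
  have := lt_aleph_one_iff.2 (le_aleph0_iff_set_countable.2 (h.countable_of_mk_lt (hA ▸ hX)))
  exact this.ne hA

theorem hasCountableRowColumnCover_iff : HasCountableRowColumnCover X ↔ #X ≤ ℵ₁ :=
  ⟨HasCountableRowColumnCover.mk_le_aleph_one, hasCountableRowColumnCover_of_mk_le_aleph_one⟩

end

theorem stmt_4 {X : Type} (hX : #X = Cardinal.continuum) :
    Cardinal.continuum = Cardinal.aleph 1 ↔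
      ∃ R C : Set (X × X), R ∪ C = Set.univ ∧
        ∀ x : X,
          (R ∩ {p : X × X | p.2 = x}).Countable ∧
          (C ∩ {p : X × X | p.1 = x}).Countable := by
  -- `𝔠` and `ℵ₁` here live in an arbitrary universe; `lift #X = 𝔠` moves the question to `X`'s.
  rw [← LE.le.ge_iff_eq' aleph_one_le_continuum, ← lift_continuum.{_, 0}, ← hX, lift_le_aleph_one]
  exact hasCountableRowColumnCover_iff.symm
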